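/- In the setting of the previous statement (two points of the equality set W of a b-conjugate-type inequality for the graph surplus b), if for some index t one has Σ_{s ∈ I(N̄(v_t))} x¹_s = Σ_{s ∈ I(N̄(v_t))} x²_s, where N̄(v_t) = N(v_t) ∪ {v_t} is the closed neighborhood, then x¹_t = x²_t. -/

import Mathlib

open scoped RealInnerProductSpace
open Finset

/-- The surplus function `b(x₁,…,x_m) = ∑_{{v_s,v_t} ∈ E(G)} x_s ⋅ x_t` associated to a
graph `G` on vertices `{1,…,m}`. -/
noncomputable def surplus {d m : ℕ} (G : SimpleGraph (Fin m)) [DecidableRel G.Adj]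
    (x : Fin m → EuclideanSpace ℝ (Fin d)) : ℝ :=
  ∑ e ∈ G.edgeFinset,
    Sym2.lift ⟨fun s t => ⟪x s, x t⟫, fun s t => real_inner_comm (x t) (x s)⟩ e

private lemma surplus_update {d m : ℕ} (G : SimpleGraph (Fin m)) [DecidableRel G.Adj]
    (x : Fin m → EuclideanSpace ℝ (Fin d)) (t : Fin m) (c : EuclideanSpace ℝ (Fin d)) :
    surplus G (Function.update x t c)
      = surplus G x + ∑ s ∈ G.neighborFinset t, (⟪c, x s⟫ - ⟪x t, x s⟫) := by
  classical
  set y := Function.update x t c with hy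
  have hdiff : surplus G y - surplus G x
      = ∑ e ∈ G.edgeFinset,
          (Sym2.lift ⟨fun s t => ⟪y s, y t⟫, fun s t => real_inner_comm (y t) (y s)⟩ e
           - Sym2.lift ⟨fun s t => ⟪x s, x t⟫, fun s t => real_inner_comm (x t) (x s)⟩ e) := by
    rw [Finset.sum_sub_distrib]; rfl
  have hfilter :
      ∑ e ∈ G.edgeFinset,
          (Sym2.lift ⟨fun s t => ⟪y s, y t⟫, fun s t => real_inner_comm (y t) (y s)⟩ e
           - Sym2.lift ⟨fun s t => ⟪x s, x t⟫, fun s t => real_inner_comm (x t) (x s)⟩ e)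
      = ∑ e ∈ G.edgeFinset.filter (fun e => t ∈ e),
          (Sym2.lift ⟨fun s t => ⟪y s, y t⟫, fun s t => real_inner_comm (y t) (y s)⟩ e
           - Sym2.lift ⟨fun s t => ⟪x s, x t⟫, fun s t => real_inner_comm (x t) (x s)⟩ e) := by
    rw [← Finset.sum_filter_add_sum_filter_not G.edgeFinset (fun e => t ∈ e)]
    have : ∑ e ∈ G.edgeFinset.filter (fun e => ¬ t ∈ e),
          (Sym2.lift ⟨fun s t => ⟪y s, y t⟫, fun s t => real_inner_comm (y t) (y s)⟩ e
           - Sym2.lift ⟨fun s t => ⟪x s, x t⟫, fun s t => real_inner_comm (x t) (x s)⟩ e) = 0 := by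
      apply Finset.sum_eq_zero
      intro e he
      rw [Finset.mem_filter] at he
      induction e with
      | h a b =>
        simp only [Sym2.mem_iff, not_or] at he
        have ha : a ≠ t := fun h => he.2.1 h.symm
        have hb : b ≠ t := fun h => he.2.2 h.symm
        simp [hy, Sym2.lift_mk, Function.update_apply, ha, hb]
    rw [this, add_zero]
  have himg : G.edgeFinset.filter (fun e => t ∈ e)
      = (G.neighborFinset t).image (fun s => s(t, s)) := by
    ext e
    induction e with
    | h a b =>
      simp only [Finset.mem_filter, SimpleGraph.mem_edgeFinset, Sym2.mem_iff,
        Finset.mem_image, SimpleGraph.mem_neighborFinset, SimpleGraph.mem_edgeSet]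
      constructor
      · rintro ⟨hab, rfl | rfl⟩
        · exact ⟨b, hab, rfl⟩
        · exact ⟨a, hab.symm, Sym2.eq_swap⟩
      · rintro ⟨s, hs, hse⟩
        rw [Sym2.eq_iff] at hse
        rcases hse with ⟨rfl, rfl⟩ | ⟨rfl, rfl⟩
        · exact ⟨hs, Or.inl rfl⟩
        · exact ⟨hs.symm, Or.inr rfl⟩
  have hinj : Set.InjOn (fun s => s(t, s)) (G.neighborFinset t) := by
    intro a _ b _ h
    simpa using (Sym2.congr_right).mp h
  rw [hfilter, himg, Finset.sum_image (fun a ha b hb h => hinj ha hb h)] at hdiff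
  have hterm : ∀ s ∈ G.neighborFinset t,
      (Sym2.lift ⟨fun s t => ⟪y s, y t⟫, fun s t => real_inner_comm (y t) (y s)⟩ s(t, s)
       - Sym2.lift ⟨fun s t => ⟪x s, x t⟫, fun s t => real_inner_comm (x t) (x s)⟩ s(t, s))
      = (⟪c, x s⟫ - ⟪x t, x s⟫ : ℝ) := by
    intro s hs
    have hadj : G.Adj t s := by simpa using hs
    have hts : s ≠ t := (G.ne_of_adj hadj).symm
    simp [hy, Sym2.lift_mk, Function.update_apply, hts]
  rw [Finset.sum_congr rfl hterm] at hdiff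
  linarith

/-- If `x¹, x²` lie in the equality set `W` of the dual inequality with `x¹₁ = x²₁`, and for
some vertex `t` the sums of the coordinates over the closed neighborhood `N̄(v_t)` agree,
then `x¹_t = x²_t`. -/
theorem eq_of_closedNeighborhood_sum_eq {d m : ℕ} [NeZero m] (G : SimpleGraph (Fin m))
    [DecidableRel G.Adj]
    (u : Fin m → EuclideanSpace ℝ (Fin d) → ℝ)
    (hdual : ∀ x : Fin m → EuclideanSpace ℝ (Fin d), surplus G x ≤ ∑ i, u i (x i))
    (x1 x2 : Fin m → EuclideanSpace ℝ (Fin d))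
    (hx1 : ∑ i, u i (x1 i) = surplus G x1)
    (hx2 : ∑ i, u i (x2 i) = surplus G x2)
    (hfirst : x1 0 = x2 0)
    (t : Fin m)
    (hsum : ∑ s ∈ insert t (G.neighborFinset t), x1 s
          = ∑ s ∈ insert t (G.neighborFinset t), x2 s) :
    x1 t = x2 t := by
  classical
  set y1 := Function.update x1 t (x2 t) with hy1
  set y2 := Function.update x2 t (x1 t) with hy2
  have husum : ∑ i, u i (y1 i) + ∑ i, u i (y2 i)
      = ∑ i, u i (x1 i) + ∑ i, u i (x2 i) := by
    rw [← Finset.sum_add_distrib, ← Finset.sum_add_distrib]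
    apply Finset.sum_congr rfl
    intro i _
    by_cases h : i = t
    · subst h; simp [hy1, hy2]; ring
    · simp [hy1, hy2, Function.update_apply, h]
  have hkey : surplus G y1 + surplus G y2 ≤ surplus G x1 + surplus G x2 := by
    have h1 := hdual y1
    have h2 := hdual y2
    linarith [husum, hx1, hx2, h1, h2]
  rw [surplus_update G x1 t (x2 t), surplus_update G x2 t (x1 t)] at hkey
  have hS : ∑ s ∈ G.neighborFinset t, (⟪x2 t - x1 t, x1 s - x2 s⟫ : ℝ) ≤ 0 := by
    have heach : ∀ s ∈ G.neighborFinset t,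
        (⟪x2 t - x1 t, x1 s - x2 s⟫ : ℝ)
        = (⟪x2 t, x1 s⟫ - ⟪x1 t, x1 s⟫) + (⟪x1 t, x2 s⟫ - ⟪x2 t, x2 s⟫) := by
      intro s _
      rw [inner_sub_left, inner_sub_right, inner_sub_right]
      ring
    rw [Finset.sum_congr rfl heach, Finset.sum_add_distrib]
    linarith [hkey]
  have hnt : t ∉ G.neighborFinset t := by simp
  rw [Finset.sum_insert hnt, Finset.sum_insert hnt] at hsum
  have hdiffsum : ∑ s ∈ G.neighborFinset t, (x1 s - x2 s) = x2 t - x1 t := by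
    rw [Finset.sum_sub_distrib]
    calc ∑ s ∈ G.neighborFinset t, x1 s - ∑ s ∈ G.neighborFinset t, x2 s
        = (x1 t + ∑ s ∈ G.neighborFinset t, x1 s)
          - (x1 t + ∑ s ∈ G.neighborFinset t, x2 s) := by abel
      _ = (x2 t + ∑ s ∈ G.neighborFinset t, x2 s)
          - (x1 t + ∑ s ∈ G.neighborFinset t, x2 s) := by rw [hsum]
      _ = x2 t - x1 t := by abel
  have hfin : (⟪x2 t - x1 t, x2 t - x1 t⟫ : ℝ) ≤ 0 := by
    calc (⟪x2 t - x1 t, x2 t - x1 t⟫ : ℝ)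
        = ⟪x2 t - x1 t, ∑ s ∈ G.neighborFinset t, (x1 s - x2 s)⟫ := by rw [hdiffsum]
      _ = ∑ s ∈ G.neighborFinset t, (⟪x2 t - x1 t, x1 s - x2 s⟫ : ℝ) := by
          rw [inner_sum]
      _ ≤ 0 := hS
  have : (⟪x2 t - x1 t, x2 t - x1 t⟫ : ℝ) = 0 :=
    le_antisymm hfin real_inner_self_nonneg
  have hz : x2 t - x1 t = 0 := by
    rwa [inner_self_eq_zero] at this
  have := sub_eq_zero.mp hz
  exact this.symm
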